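/- arXiv:math/0305314 — 6 statements merged into one kernel-verified Lean document; each statement's English description precedes it below -/
import Mathlib

section
/- Let K be a field of characteristic zero, L a field extension of K, and V a finite-dimensional L-vector space. Let f and g be semisimple L-linear endomorphisms of V such that for every natural number n the traces tr(g^n) and tr(f ∘ g^n) lie in K (i.e. in the image of the algebra map K → L), and such that the characteristic polynomial of g has all its coefficients in K. Let P be a polynomial with coefficients in K, let W = ker P(g) (the kernel of the endomorphism obtained by evaluating P at g, via the map K[X] → L[X]), and assume f(W) ⊆ W. Then the trace of the restriction f|_W lies in K. -/
open Polynomial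

/-- Lemma 4.1 of the paper: if `f`, `g` are semisimple endomorphisms of a finite-dimensional
`L`-vector space with `tr(gⁿ)` and `tr(f gⁿ)` in `K` and the characteristic polynomial of `g`
has coefficients in `K`, then for `W = ker P(g)` with `P ∈ K[X]` stable under `f`,
the trace of `f` restricted to `W` lies in `K`. -/
theorem trace_restrict_mem_range_algebraMap
    (K L : Type*) [Field K] [CharZero K] [Field L] [Algebra K L]
    (V : Type*) [AddCommGroup V] [Module L V] [FiniteDimensional L V]
    (f g : Module.End L V)
    (hf : f.IsSemisimple) (hg : g.IsSemisimple)
    (htrg : ∀ n : ℕ, LinearMap.trace L V (g ^ n) ∈ Set.range (algebraMap K L))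
    (htrfg : ∀ n : ℕ, LinearMap.trace L V (f * g ^ n) ∈ Set.range (algebraMap K L))
    (hchar : ∀ i : ℕ, (LinearMap.charpoly g).coeff i ∈ Set.range (algebraMap K L))
    (P : K[X])
    (hW : ∀ x ∈ LinearMap.ker (aeval g (P.map (algebraMap K L))),
      f x ∈ LinearMap.ker (aeval g (P.map (algebraMap K L)))) :
    LinearMap.trace L (LinearMap.ker (aeval g (P.map (algebraMap K L))))
      (f.restrict hW) ∈ Set.range (algebraMap K L) := by
  classical
  set W : Submodule L V := LinearMap.ker (aeval g (P.map (algebraMap K L))) with hWdef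
  -- the ring hom `K[X] → End L V`, `q ↦ (aeval g) (q.map (algebraMap K L))`
  set θ : K[X] →+* Module.End L V :=
    ((aeval g : L[X] →ₐ[L] Module.End L V) : L[X] →+* Module.End L V).comp
      (mapRingHom (algebraMap K L)) with hθdef
  have hθ : ∀ q : K[X], θ q = aeval g (q.map (algebraMap K L)) := fun _ => rfl
  -- a preimage of the characteristic polynomial
  set c₀ : K[X] := ∑ i ∈ Finset.range ((LinearMap.charpoly g).natDegree + 1),
    C ((hchar i).choose) * X ^ i with hc₀def
  have hc₀ : c₀.map (algebraMap K L) = LinearMap.charpoly g := by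
    ext i
    rw [coeff_map]
    simp only [hc₀def, finset_sum_coeff, coeff_C_mul, coeff_X_pow, mul_ite, mul_one, mul_zero,
      Finset.sum_ite_eq (Finset.range _) i, Finset.mem_range]
    split_ifs with h
    · exact (hchar i).choose_spec
    · rw [map_zero]
      exact (coeff_eq_zero_of_natDegree_lt (by omega)).symm
  have hc₀mem : c₀ ∈ RingHom.ker θ := by
    rw [RingHom.mem_ker, hθ, hc₀, LinearMap.aeval_self_charpoly]
  -- the generator of the kernel ideal
  set m₀ : K[X] := Submodule.IsPrincipal.generator (RingHom.ker θ : Ideal K[X]) with hm₀def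
  have hm₀span : Ideal.span {m₀} = RingHom.ker θ := Ideal.span_singleton_generator _
  have hm₀0 : θ m₀ = 0 := Submodule.IsPrincipal.generator_mem (RingHom.ker θ : Ideal K[X])
  have hm₀ne : m₀ ≠ 0 := by
    intro h
    have : c₀ ∈ Ideal.span ({m₀} : Set K[X]) := hm₀span ▸ hc₀mem
    rw [h, Ideal.span_singleton_eq_bot.mpr rfl, Ideal.mem_bot] at this
    have : LinearMap.charpoly g = 0 := by rw [← hc₀, this, Polynomial.map_zero]
    exact (LinearMap.charpoly_monic g).ne_zero this
  -- `m₀` is squarefree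
  have hsq : Squarefree m₀ := by
    intro x hx
    obtain ⟨y, hy⟩ := hx
    have hx0 : x ≠ 0 := by rintro rfl; exact hm₀ne (by simpa using hy)
    have hy0 : y ≠ 0 := by rintro rfl; exact hm₀ne (by simpa using hy)
    have hnil : IsNilpotent (θ (x * y)) := by
      refine ⟨2, ?_⟩
      rw [← map_pow]
      have h2 : (x * y) ^ 2 = m₀ * y := by rw [hy]; ring
      rw [h2, map_mul, hm₀0, zero_mul]
    have hss : (θ (x * y)).IsSemisimple := by
      rw [hθ]; exact hg.aeval _
    have hxy0 : θ (x * y) = 0 := Module.End.eq_zero_of_isNilpotent_isSemisimple hnil hss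
    have hdvd : m₀ ∣ x * y := by
      rw [← Ideal.mem_span_singleton, hm₀span, RingHom.mem_ker]
      exact hxy0
    have hle := Polynomial.natDegree_le_of_dvd hdvd (mul_ne_zero hx0 hy0)
    rw [hy, natDegree_mul (mul_ne_zero hx0 hx0) hy0, natDegree_mul hx0 hx0,
      natDegree_mul hx0 hy0] at hle
    have hxdeg : x.natDegree = 0 := by omega
    obtain ⟨a, rfl⟩ := Polynomial.natDegree_eq_zero.mp hxdeg
    exact isUnit_C.mpr (isUnit_iff_ne_zero.mpr (by rintro rfl; simp at hx0))
  -- decompose `m₀ = d₀ * e₀` with `ker (d₀(g)) = W` and `d₀, e₀` coprime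
  set d₀ : K[X] := EuclideanDomain.gcd P m₀ with hd₀def
  obtain ⟨e₀, he₀⟩ : d₀ ∣ m₀ := EuclideanDomain.gcd_dvd_right P m₀
  have hcop : IsCoprime d₀ e₀ := by
    rw [← EuclideanDomain.gcd_isUnit_iff]
    exact hsq _ (he₀ ▸ mul_dvd_mul (EuclideanDomain.gcd_dvd_left d₀ e₀)
      (EuclideanDomain.gcd_dvd_right d₀ e₀))
  obtain ⟨a, b, hab⟩ := hcop
  -- (1) `d₀(g)` kills `W`
  have hWd : ∀ x ∈ W, θ d₀ x = 0 := by
    intro x hx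
    rw [hWdef, LinearMap.mem_ker] at hx
    have hsplit : θ d₀ = θ (EuclideanDomain.gcdA P m₀) * θ P
        + θ (EuclideanDomain.gcdB P m₀) * θ m₀ := by
      rw [← map_mul, ← map_mul, ← map_add, hd₀def]
      rw [EuclideanDomain.gcd_eq_gcd_ab P m₀]
      ring_nf
    rw [hsplit, LinearMap.add_apply, Module.End.mul_apply, Module.End.mul_apply, hm₀0,
      LinearMap.zero_apply, map_zero, hθ P, hx, map_zero, add_zero]
  -- (2) anything killed by `d₀(g)` is in `W`
  have hdW : ∀ x : V, θ d₀ x = 0 → x ∈ W := by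
    intro x hx
    obtain ⟨s, hs⟩ : d₀ ∣ P := EuclideanDomain.gcd_dvd_left P m₀
    rw [hWdef, LinearMap.mem_ker, ← hθ P, hs, mul_comm, map_mul, Module.End.mul_apply, hx,
      map_zero]
  -- (3) the projector `θ (b * e₀)` is the identity on `W`
  have hproj_id : ∀ x ∈ W, θ (b * e₀) x = x := by
    intro x hx
    have h2 : θ (a * d₀) x = 0 := by
      rw [map_mul, Module.End.mul_apply, hWd x hx, map_zero]
    calc θ (b * e₀) x = θ (a * d₀) x + θ (b * e₀) x := by rw [h2, zero_add]
      _ = θ (a * d₀ + b * e₀) x := by rw [map_add, LinearMap.add_apply]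
      _ = x := by rw [hab, map_one, Module.End.one_apply]
  -- (4) the projector maps everything into `W`
  have hproj_mem : ∀ v : V, θ (b * e₀) v ∈ W := by
    intro v
    apply hdW
    rw [← Module.End.mul_apply, ← map_mul, show d₀ * (b * e₀) = b * (d₀ * e₀) by ring, ← he₀,
      map_mul, Module.End.mul_apply, hm₀0, LinearMap.zero_apply, map_zero]
  -- the restriction of `f` to `W` has the same trace as `f * θ (b * e₀)` on `V`
  have hmem : ∀ x : V, (f * θ (b * e₀)) x ∈ W := fun x => hW _ (hproj_mem x)
  have htr := LinearMap.trace_restrict_eq_of_forall_mem W (f * θ (b * e₀)) hmem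
  have hres : (f * θ (b * e₀)).restrict (fun x _ => hmem x) = f.restrict hW := by
    refine LinearMap.ext fun x => Subtype.ext ?_
    simp only [LinearMap.restrict_apply, Module.End.mul_apply, hproj_id x.1 x.2]
  rw [← hres, htr]
  -- compute the trace as a combination of `tr (f * gⁿ)`
  rw [show (f * θ (b * e₀)) = f * aeval g ((b * e₀).map (algebraMap K L)) by rw [hθ]]
  rw [Polynomial.aeval_eq_sum_range, Finset.mul_sum]
  simp_rw [mul_smul_comm]
  rw [map_sum]
  simp_rw [map_smul, smul_eq_mul, Polynomial.coeff_map]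
  rw [← RingHom.coe_range, SetLike.mem_coe]
  apply Subring.sum_mem
  intro i _
  apply Subring.mul_mem
  · exact ⟨_, rfl⟩
  · obtain ⟨t, ht⟩ := htrfg i
    exact ⟨t, ht⟩
end

section
/- Let K be a field of characteristic zero, L a field extension of K, V a finite-dimensional L-vector space, G a group, and ρ : G → GL(V) a group representation such that for every g ∈ G the automorphism ρ(g) is semisimple and tr(ρ(g)) lies in K. Let u = ρ(g₀) for some g₀ ∈ G, let P ∈ K[X] satisfy P(u) = 0 (evaluating via K[X] → L[X]), and write P = P₁·P₂ with P₁, P₂ coprime in K[X]. If the subspaces Δ₁ = ker P₁(u) and Δ₂ = ker P₂(u) are both stable under ρ(g) for every g ∈ G, then V is the internal direct sum V = Δ₁ ⊕ Δ₂, and for i = 1, 2 and every g ∈ G the trace of the restriction of ρ(g) to Δᵢ lies in K. -/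
/-!
If `a P₁ + b P₂ = 1` in `K[X]` and `P₁ P₂` kills `u = ρ g₀`, then `π = (b P₂)(u)` is a projection
of `V` onto `Δ₁ = ker P₁(u)` which is a polynomial in `u` with coefficients in `K`. Hence for
every `g`, the trace of `ρ g` on `Δ₁` equals the trace of `π ∘ ρ g` on `V`, which is a
`K`-linear combination of the traces of the `ρ (g₀ ^ i * g)`, all of which lie in `K`.
-/

open Polynomial

namespace Polynomial

variable {R M : Type*} [CommRing R] [AddCommGroup M] [Module R M]

theorem isCompl_ker_aeval_of_isCoprime (f : Module.End R M) {p q : R[X]} (hpq : IsCoprime p q)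
    (hf : aeval f (p * q) = 0) :
    IsCompl (LinearMap.ker (aeval f p)) (LinearMap.ker (aeval f q)) := by
  refine ⟨disjoint_ker_aeval_of_isCoprime f hpq, codisjoint_iff.mpr ?_⟩
  rw [sup_ker_aeval_eq_ker_aeval_mul_of_coprime f hpq, hf, LinearMap.ker_zero]

theorem isProj_ker_aeval_of_add_mul_eq_one (f : Module.End R M) {a b p q : R[X]}
    (hab : a * p + b * q = 1) (hf : aeval f (p * q) = 0) :
    LinearMap.IsProj (LinearMap.ker (aeval f p)) (aeval f (b * q)) where
  map_mem x := by
    have : aeval f (p * (b * q)) = 0 := by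
      rw [mul_left_comm, aeval_mul, hf, mul_zero]
    rw [LinearMap.mem_ker, ← Module.End.mul_apply, ← aeval_mul, this, LinearMap.zero_apply]
  map_id x hx := by
    have := congr($(congr(aeval f $hab)) x)
    rwa [aeval_add, aeval_mul, LinearMap.add_apply, Module.End.mul_apply, LinearMap.mem_ker.mp hx,
      map_zero, zero_add, aeval_one, Module.End.one_apply] at this

end Polynomial

theorem LinearMap.IsProj.trace_restrict_eq {R M : Type*} [CommRing R] [IsDomain R]
    [IsPrincipalIdealRing R] [AddCommGroup M] [Module R M] [Module.Finite R M] [Module.Free R M]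
    {W : Submodule R M} {π : Module.End R M} (hπ : LinearMap.IsProj W π) (f : Module.End R M)
    (hf : ∀ x ∈ W, f x ∈ W) :
    LinearMap.trace R W (f.restrict hf) = LinearMap.trace R M (π * f) := by
  have hπf : ∀ x, (π * f) x ∈ W := fun x => hπ.map_mem (f x)
  have hrestrict : f.restrict hf = (π * f).restrict (fun x _ => hπf x) := by
    ext x
    exact (hπ.map_id (f x) (hf x x.2)).symm
  rw [hrestrict, LinearMap.trace_restrict_eq_of_forall_mem W _ hπf]

theorem trace_aeval_map_mul_mem_range {K L V G : Type*} [CommRing K] [CommRing L] [Algebra K L]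
    [AddCommGroup V] [Module L V] [Monoid G] (ρ : G →* Module.End L V)
    (htr : ∀ g, LinearMap.trace L V (ρ g) ∈ Set.range (algebraMap K L)) (g₀ g : G) (Q : K[X]) :
    LinearMap.trace L V (aeval (ρ g₀) (Q.map (algebraMap K L)) * ρ g)
      ∈ Set.range (algebraMap K L) := by
  rw [← RingHom.coe_range] at htr ⊢
  rw [aeval_eq_sum_range, Finset.sum_mul, map_sum]
  refine Subring.sum_mem _ fun i _ => ?_
  rw [smul_mul_assoc, LinearMap.map_smul, coeff_map, smul_eq_mul, ← map_pow, ← map_mul]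
  exact Subring.mul_mem _ ⟨_, rfl⟩ (htr _)

theorem trace_restrict_ker_aeval_mem_range {K L V G : Type*} [Field K] [Field L] [Algebra K L]
    [AddCommGroup V] [Module L V] [FiniteDimensional L V] [Monoid G] (ρ : G →* Module.End L V)
    (htr : ∀ g, LinearMap.trace L V (ρ g) ∈ Set.range (algebraMap K L)) (g₀ : G) {P₁ P₂ : K[X]}
    (hcop : IsCoprime P₁ P₂) (hu : aeval (ρ g₀) ((P₁ * P₂).map (algebraMap K L)) = 0) (g : G)
    (hg : ∀ x ∈ LinearMap.ker (aeval (ρ g₀) (P₁.map (algebraMap K L))), ρ g x ∈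
      LinearMap.ker (aeval (ρ g₀) (P₁.map (algebraMap K L)))) :
    LinearMap.trace L _ ((ρ g).restrict hg) ∈ Set.range (algebraMap K L) := by
  obtain ⟨a, b, hab⟩ := hcop
  have habL := congr(($hab).map (algebraMap K L))
  simp only [Polynomial.map_add, Polynomial.map_mul, Polynomial.map_one] at habL hu
  rw [(isProj_ker_aeval_of_add_mul_eq_one (ρ g₀) habL hu).trace_restrict_eq, ← Polynomial.map_mul]
  exact trace_aeval_map_mul_mem_range ρ htr g₀ g (b * P₂)

theorem subrepresentation_defined_over_base_general
    (K L : Type*) [Field K] [Field L] [Algebra K L]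
    (V : Type*) [AddCommGroup V] [Module L V] [FiniteDimensional L V]
    (G : Type*) [Group G] (ρ : G →* (Module.End L V)ˣ)
    (htr : ∀ g : G, LinearMap.trace L V (ρ g : Module.End L V) ∈ Set.range (algebraMap K L))
    (g₀ : G) (P P₁ P₂ : K[X])
    (hPu : aeval (ρ g₀ : Module.End L V) (P.map (algebraMap K L)) = 0)
    (hP : P = P₁ * P₂) (hcop : IsCoprime P₁ P₂)
    (Δ₁ Δ₂ : Submodule L V)
    (hΔ₁ : Δ₁ = LinearMap.ker (aeval (ρ g₀ : Module.End L V) (P₁.map (algebraMap K L))))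
    (hΔ₂ : Δ₂ = LinearMap.ker (aeval (ρ g₀ : Module.End L V) (P₂.map (algebraMap K L))))
    (hstab₁ : ∀ g : G, ∀ x ∈ Δ₁, (ρ g : Module.End L V) x ∈ Δ₁)
    (hstab₂ : ∀ g : G, ∀ x ∈ Δ₂, (ρ g : Module.End L V) x ∈ Δ₂) :
    IsCompl Δ₁ Δ₂ ∧
    (∀ g : G, LinearMap.trace L Δ₁ ((ρ g : Module.End L V).restrict (hstab₁ g))
      ∈ Set.range (algebraMap K L)) ∧
    (∀ g : G, LinearMap.trace L Δ₂ ((ρ g : Module.End L V).restrict (hstab₂ g))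
      ∈ Set.range (algebraMap K L)) := by
  subst hΔ₁ hΔ₂ hP
  let ρ' : G →* Module.End L V := (Units.coeHom _).comp ρ
  have hcopL := hcop.map (mapRingHom (algebraMap K L))
  refine ⟨isCompl_ker_aeval_of_isCoprime _ hcopL ?_,
    fun g => trace_restrict_ker_aeval_mem_range ρ' htr g₀ hcop hPu g (hstab₁ g),
    fun g => trace_restrict_ker_aeval_mem_range ρ' htr g₀ hcop.symm ?_ g (hstab₂ g)⟩
  · rwa [← Polynomial.map_mul]
  · rwa [mul_comm]

/-- Corollary 4.2 of the paper: for a semisimple representation defined over `K`, if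
`P = P₁ P₂` with `P₁, P₂` coprime in `K[X]` annihilates `u = ρ g₀`, and the kernels
`Δᵢ = ker Pᵢ(u)` are stable under the representation, then `V = Δ₁ ⊕ Δ₂` and each `Δᵢ`
is defined over `K` (the traces of the restricted representation lie in `K`). -/
theorem subrepresentation_defined_over_base
    (K L : Type*) [Field K] [CharZero K] [Field L] [Algebra K L]
    (V : Type*) [AddCommGroup V] [Module L V] [FiniteDimensional L V]
    (G : Type*) [Group G] (ρ : G →* (Module.End L V)ˣ)
    (hss : ∀ g : G, (ρ g : Module.End L V).IsSemisimple)
    (htr : ∀ g : G, LinearMap.trace L V (ρ g : Module.End L V) ∈ Set.range (algebraMap K L))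
    (g₀ : G) (P P₁ P₂ : K[X])
    (hPu : aeval (ρ g₀ : Module.End L V) (P.map (algebraMap K L)) = 0)
    (hP : P = P₁ * P₂) (hcop : IsCoprime P₁ P₂)
    (Δ₁ Δ₂ : Submodule L V)
    (hΔ₁ : Δ₁ = LinearMap.ker (aeval (ρ g₀ : Module.End L V) (P₁.map (algebraMap K L))))
    (hΔ₂ : Δ₂ = LinearMap.ker (aeval (ρ g₀ : Module.End L V) (P₂.map (algebraMap K L))))
    (hstab₁ : ∀ g : G, ∀ x ∈ Δ₁, (ρ g : Module.End L V) x ∈ Δ₁)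
    (hstab₂ : ∀ g : G, ∀ x ∈ Δ₂, (ρ g : Module.End L V) x ∈ Δ₂) :
    IsCompl Δ₁ Δ₂ ∧
    (∀ g : G, LinearMap.trace L Δ₁ ((ρ g : Module.End L V).restrict (hstab₁ g))
      ∈ Set.range (algebraMap K L)) ∧
    (∀ g : G, LinearMap.trace L Δ₂ ((ρ g : Module.End L V).restrict (hstab₂ g))
      ∈ Set.range (algebraMap K L)) :=
  subrepresentation_defined_over_base_general K L V G ρ htr g₀ P P₁ P₂ hPu hP hcop Δ₁ Δ₂ hΔ₁ hΔ₂
    hstab₁ hstab₂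
end

section
/- Let K be a field of characteristic zero, L a field extension of K, V a finite-dimensional L-vector space of dimension d, and let u and v be two commuting semisimple L-linear automorphisms of V such that tr(uⁱ ∘ vʲ) lies in K (i.e. in the image of the algebra map K → L) for all natural numbers i, j, and such that the characteristic polynomial of u equals its minimal polynomial. Then, in a fixed algebraic closure Ω of L, every eigenvalue of v (i.e. every root in Ω of the characteristic polynomial of v) lies in the subfield of Ω generated by the image of K together with the eigenvalues of u (the roots in Ω of the characteristic polynomial of u). -/
/-!
The characteristic polynomial of `u` is its minimal polynomial, squarefree since `u` is
semisimple, hence separable in characteristic zero. After extending scalars to `Ω` it gives an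
eigenbasis `(e_λ)` of `u` indexed by its distinct eigenvalues `λ`, and `v`, commuting with `u`,
is diagonal in it: `v e_λ = μ_λ e_λ`. The traces `tr(uⁿ v) = ∑ λⁿ μ_λ` lie in `K`; pairing them
with the coefficients of `∏_{κ ≠ λ} (X - κ)` isolates `∏_{κ ≠ λ} (λ - κ) · μ_λ`, so each
eigenvalue `μ_λ` of `v` lies in the field generated by `K` and the `λ`.
-/

open Polynomial

namespace Module.Basis

variable {R W ι : Type*} [CommRing R] [AddCommGroup W] [Module R W] (b : Basis ι R W)
  {f : Module.End R W} {c : ι → R}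

theorem toMatrix_eq_diagonal [Fintype ι] [DecidableEq ι] (h : ∀ i, f (b i) = c i • b i) :
    LinearMap.toMatrix b b f = Matrix.diagonal c := by
  ext i j
  rcases eq_or_ne i j with rfl | hij <;> simp [LinearMap.toMatrix_apply, *]

theorem trace_eq_sum_of_apply_eq_smul [Fintype ι] [DecidableEq ι] (h : ∀ i, f (b i) = c i • b i) :
    LinearMap.trace R W f = ∑ i, c i := by
  rw [LinearMap.trace_eq_matrix_trace R b f, b.toMatrix_eq_diagonal h, Matrix.trace_diagonal]

theorem charpoly_eq_prod_of_apply_eq_smul [Fintype ι] [DecidableEq ι] [Module.Free R W]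
    [Module.Finite R W] (h : ∀ i, f (b i) = c i • b i) :
    f.charpoly = ∏ i, (X - C (c i)) := by
  rw [← f.charpoly_toMatrix b, b.toMatrix_eq_diagonal h, Matrix.charpoly_diagonal]

theorem repr_apply_of_apply_eq_smul (h : ∀ i, f (b i) = c i • b i) (x : W) (i : ι) :
    b.repr (f x) i = c i * b.repr x i := by
  have : (b.coord i).comp f = c i • b.coord i := b.ext fun j => by
    rcases eq_or_ne j i with rfl | hji <;> simp [*]
  simpa using LinearMap.congr_fun this x

theorem apply_eq_repr_smul_of_commute {K W ι : Type*} [Field K] [AddCommGroup W] [Module K W]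
    (b : Basis ι K W) {f g : Module.End K W} {c : ι → K} (hc : c.Injective)
    (hf : ∀ i, f (b i) = c i • b i) (hfg : Commute f g) (i : ι) :
    g (b i) = b.repr (g (b i)) i • b i := by
  have hcoord : ∀ j, c j * b.repr (g (b i)) j = c i * b.repr (g (b i)) j := fun j => by
    rw [← b.repr_apply_of_apply_eq_smul hf, ← Module.End.mul_apply, hfg.eq, Module.End.mul_apply,
      hf, map_smul, map_smul, Finsupp.smul_apply, smul_eq_mul]
  refine b.ext_elem fun j => ?_
  rcases eq_or_ne j i with rfl | hji
  · simp
  · simpa [hji, hc.ne hji] using hcoord j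

end Module.Basis

theorem Module.End.exists_basis_apply_eq_smul_of_separable {K W : Type*} [Field K]
    [DecidableEq K] [AddCommGroup W] [Module K W] [FiniteDimensional K W] (f : Module.End K W)
    (hsep : f.charpoly.Separable) (hsplit : f.charpoly.Splits) :
    ∃ b : Module.Basis f.charpoly.roots.toFinset K W, ∀ x, f (b x) = (x : K) • b x := by
  have hev : ∀ x : f.charpoly.roots.toFinset, f.HasEigenvalue x := fun x =>
    (f.hasEigenvalue_iff_isRoot_charpoly x).2 (mem_roots'.1 (Multiset.mem_toFinset.1 x.2)).2
  choose e he using fun x => (hev x).exists_hasEigenvector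
  have hcard : Fintype.card f.charpoly.roots.toFinset = Module.finrank K W := by
    rw [Fintype.card_coe, Multiset.toFinset_card_of_nodup (nodup_roots hsep),
      splits_iff_card_roots.1 hsplit, LinearMap.charpoly_natDegree]
  exact ⟨basisOfLinearIndependentOfCardEqFinrank' e
    (f.eigenvectors_linearIndependent' _ Subtype.coe_injective e he) hcard,
    fun x => by simpa using (he x).apply_eq_smul⟩

theorem Subfield.sum_aeval_mul_mem {Ω ι : Type*} [Field Ω] [Fintype ι] (F : Subfield Ω)
    {x y : ι → Ω} (hT : ∀ n : ℕ, ∑ i, x i ^ n * y i ∈ F) (p : F[X]) :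
    ∑ i, aeval (x i) p * y i ∈ F := by
  simp_rw [aeval_eq_sum_range, Finset.sum_mul, smul_mul_assoc]
  rw [Finset.sum_comm]
  simp_rw [← Finset.smul_sum]
  exact F.sum_mem fun n _ => F.mul_mem (p.coeff n).2 (hT n)

/-- In effect, the Vandermonde matrix of the `x i` is invertible over `F`. -/
theorem Subfield.mem_of_forall_sum_pow_mul_mem {Ω ι : Type*} [Field Ω] [Fintype ι]
    [DecidableEq ι] (F : Subfield Ω) {x y : ι → Ω} (hx : x.Injective) (hxF : ∀ i, x i ∈ F)
    (hT : ∀ n : ℕ, ∑ i, x i ^ n * y i ∈ F) (i : ι) : y i ∈ F := by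
  let p : F[X] := ∏ k ∈ Finset.univ.erase i, (X - C ⟨x k, hxF k⟩)
  have hp : ∀ j, aeval (x j) p = ∏ k ∈ Finset.univ.erase i, (x j - x k) := fun j => by
    simp only [p, map_prod, aeval_sub, aeval_X, aeval_C]
    rfl
  have hpi : aeval (x i) p ≠ 0 := hp i ▸ Finset.prod_ne_zero_iff.2 fun k hk =>
    sub_ne_zero.2 (hx.ne (Finset.ne_of_mem_erase hk).symm)
  have hsum : ∑ j, aeval (x j) p * y j = aeval (x i) p * y i := by
    refine Finset.sum_eq_single i (fun j _ hji => ?_) (by simp)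
    rw [hp, Finset.prod_eq_zero (Finset.mem_erase.2 ⟨hji, Finset.mem_univ j⟩) (sub_self _),
      zero_mul]
  have hpiF : aeval (x i) p ∈ F := hp i ▸ F.prod_mem fun k _ => F.sub_mem (hxF i) (hxF k)
  have := F.mul_mem (F.inv_mem hpiF) (hsum ▸ F.sum_aeval_mul_mem hT p)
  rwa [inv_mul_cancel_left₀ hpi] at this

theorem Module.End.mem_of_isRoot_charpoly_of_trace_pow_mul_mem {Ω W : Type*} [Field Ω]
    [AddCommGroup W] [Module Ω W] [FiniteDimensional Ω W] {f g : Module.End Ω W}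
    (hsep : f.charpoly.Separable) (hsplit : f.charpoly.Splits) (hfg : Commute f g)
    (F : Subfield Ω) (hroots : ∀ x, f.charpoly.IsRoot x → x ∈ F)
    (htr : ∀ n : ℕ, LinearMap.trace Ω W (f ^ n * g) ∈ F) {μ : Ω} (hμ : g.charpoly.IsRoot μ) :
    μ ∈ F := by
  classical
  obtain ⟨b, hf⟩ := f.exists_basis_apply_eq_smul_of_separable hsep hsplit
  set c := fun x => b.repr (g (b x)) x
  have hg : ∀ x, g (b x) = c x • b x := b.apply_eq_repr_smul_of_commute Subtype.coe_injective hf hfg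
  have hfg_pow : ∀ n x, (f ^ n * g) (b x) = ((x : Ω) ^ n * c x) • b x := fun n x => by
    rw [Module.End.mul_apply, hg, map_smul,
      (show f.HasEigenvector x (b x) from ⟨mem_eigenspace_iff.2 (hf x), b.ne_zero x⟩).pow_apply,
      smul_smul, mul_comm]
  have hcF : ∀ x, c x ∈ F := F.mem_of_forall_sum_pow_mul_mem Subtype.coe_injective
    (fun x => hroots x (mem_roots'.1 (Multiset.mem_toFinset.1 x.2)).2)
    (fun n => b.trace_eq_sum_of_apply_eq_smul (hfg_pow n) ▸ htr n)
  rw [b.charpoly_eq_prod_of_apply_eq_smul hg, IsRoot, eval_prod, Finset.prod_eq_zero_iff] at hμ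
  obtain ⟨x, -, hx⟩ := hμ
  rw [eval_sub, eval_X, eval_C, sub_eq_zero] at hx
  exact hx ▸ hcF x

theorem eigenvalues_mem_subfield_adjoin_eigenvalues_general
    (K L Ω : Type*) [Field K] [CharZero K] [Field L] [Algebra K L]
    [Field Ω] [Algebra L Ω] [IsAlgClosed Ω] [Algebra K Ω] [IsScalarTower K L Ω]
    (V : Type*) [AddCommGroup V] [Module L V] [FiniteDimensional L V]
    (u v : Module.End L V)
    (hcomm : Commute u v)
    (hus : u.IsSemisimple)
    (htr : ∀ i j : ℕ, LinearMap.trace L V (u ^ i * v ^ j) ∈ Set.range (algebraMap K L))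
    (hmin : LinearMap.charpoly u = minpoly L u) :
    ∀ μ : Ω, aeval μ (LinearMap.charpoly v) = 0 →
      μ ∈ Subfield.closure
        (Set.range (algebraMap K Ω) ∪ {z : Ω | aeval z (LinearMap.charpoly u) = 0}) := by
  intro μ hμ
  have : CharZero L := charZero_of_injective_algebraMap (algebraMap K L).injective
  have hsep : u.charpoly.Separable :=
    PerfectField.separable_iff_squarefree.2 (hmin ▸ hus.minpoly_squarefree)
  refine Module.End.mem_of_isRoot_charpoly_of_trace_pow_mul_mem (f := u.baseChange Ω)
    (g := v.baseChange Ω) ?_ (IsAlgClosed.splits _) ?_ _ (fun x hx => ?_) (fun n => ?_) ?_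
  · exact u.charpoly_baseChange Ω ▸ hsep.map
  · rw [commute_iff_eq, ← LinearMap.baseChange_mul, hcomm.eq, LinearMap.baseChange_mul]
  · rw [u.charpoly_baseChange Ω, IsRoot, eval_map_algebraMap] at hx
    exact Subfield.subset_closure (Or.inr hx)
  · obtain ⟨c, hc⟩ := htr n 1
    rw [← LinearMap.baseChange_pow, ← LinearMap.baseChange_mul, LinearMap.trace_baseChange,
      ← pow_one v, ← hc, ← IsScalarTower.algebraMap_apply]
    exact Subfield.subset_closure (Or.inl ⟨c, rfl⟩)
  · rwa [v.charpoly_baseChange Ω, IsRoot, eval_map_algebraMap]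

/-- Lemma 4.3 of the paper: if `u`, `v` are commuting semisimple automorphisms of a
finite-dimensional `L`-vector space with `tr(uⁱ vʲ) ∈ K` for all `i, j`, and the
characteristic polynomial of `u` equals its minimal polynomial, then every eigenvalue of `v`
(in an algebraic closure `Ω` of `L`) lies in the subfield generated by `K` and the
eigenvalues of `u`. -/
theorem eigenvalues_mem_subfield_adjoin_eigenvalues
    (K L Ω : Type*) [Field K] [CharZero K] [Field L] [Algebra K L]
    [Field Ω] [Algebra L Ω] [IsAlgClosed Ω] [Algebra K Ω] [IsScalarTower K L Ω]
    (V : Type*) [AddCommGroup V] [Module L V] [FiniteDimensional L V]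
    (u v : Module.End L V) (hu : IsUnit u) (hv : IsUnit v)
    (hcomm : Commute u v)
    (hus : u.IsSemisimple) (hvs : v.IsSemisimple)
    (htr : ∀ i j : ℕ, LinearMap.trace L V (u ^ i * v ^ j) ∈ Set.range (algebraMap K L))
    (hmin : LinearMap.charpoly u = minpoly L u) :
    ∀ μ : Ω, aeval μ (LinearMap.charpoly v) = 0 →
      μ ∈ Subfield.closure
        (Set.range (algebraMap K Ω) ∪ {z : Ω | aeval z (LinearMap.charpoly u) = 0}) :=
  eigenvalues_mem_subfield_adjoin_eigenvalues_general K L Ω V u v hcomm hus htr hmin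
end

section
/- Let p be a prime and let E be a finite-dimensional semisimple ℚ_p-algebra equipped with a ℚ_p-linear involution †, i.e. an additive map x ↦ x^† with (xy)^† = y^† x^†, (x^†)^† = x, and (c·x)^† = c·x^† for c ∈ ℚ_p. Endow E with its canonical topology as a finite-dimensional ℚ_p-vector space (equivalently, assume E is a topological ring whose topology is the ℚ_p-module topology). Let E^† = {x ∈ E : x^† = x}, with the subspace topology. Then for every invertible element γ ∈ E^† ∩ E^×, the orbit {α · γ · α^† : α ∈ E^×} is an open subset of E^†. -/
open scoped NNReal

private lemma aux_sqrt {E : Type*} [NormedRing E] [CompleteSpace E]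
    (τ : E → E) (hτc : Continuous τ)
    (hτadd : ∀ x y : E, τ (x + y) = τ x + τ y)
    (hτmul : ∀ x y : E, τ (x * y) = τ y * τ x)
    (hτone : τ (1 : E) = 1)
    (w : E) (hw : w + w = 1) (hwc : ∀ v : E, w * v = v * w) (hτw : τ w = w) :
    ∃ δ : ℝ, 0 < δ ∧ ∀ h : E, τ h = h → ‖h‖ < δ →
      ∃ α : Eˣ, (α : E) * τ (α : E) = 1 + h := by
  have hτ0 : τ 0 = 0 := by
    have h0 := hτadd 0 0
    rw [add_zero] at h0
    exact (left_eq_add.mp h0)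
  have hτneg : ∀ x : E, τ (-x) = -τ x := by
    intro x
    have h0 := hτadd x (-x)
    rw [add_neg_cancel, hτ0] at h0
    exact eq_neg_of_add_eq_zero_right h0.symm
  have hτsub : ∀ x y : E, τ (x - y) = τ x - τ y := by
    intro x y
    rw [sub_eq_add_neg, hτadd, hτneg, ← sub_eq_add_neg]
  set C : ℝ := ‖w‖ + 1 with hC
  have hCpos : 0 < C := by positivity
  have hC1 : 1 ≤ C := by nlinarith [norm_nonneg w]
  set ε : ℝ := 1 / (4 * C) with hε
  have hεpos : 0 < ε := by positivity
  have hCε : C * ε = 1 / 4 := by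
    rw [hε]; field_simp
  have hε1 : ε < 1 := by
    rw [hε, div_lt_one (by positivity)]; nlinarith
  set δ : ℝ := ε / (2 * C) with hδ
  have hδpos : 0 < δ := by positivity
  have hCδ : C * δ = ε / 2 := by
    rw [hδ]; field_simp
  clear_value δ ε C
  refine ⟨δ, hδpos, ?_⟩
  intro h hτh hh
  have hwC : ‖w‖ ≤ C := by nlinarith
  set S : Set E := {y : E | ‖y‖ ≤ ε ∧ τ y = y} with hS
  have hSclosed : IsClosed S :=
    (isClosed_le continuous_norm continuous_const).inter (isClosed_eq hτc continuous_id)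
  haveI : CompleteSpace S := hSclosed.completeSpace_coe
  haveI : Nonempty S := ⟨⟨0, ⟨by simpa using hεpos.le, hτ0⟩⟩⟩
  have hmem : ∀ y : E, y ∈ S → w * (h - y * y) ∈ S := by
    intro y hy
    obtain ⟨hy1, hy2⟩ := hy
    constructor
    · have b1 : ‖w * (h - y * y)‖ ≤ ‖w‖ * ‖h - y * y‖ := norm_mul_le _ _
      have b2 : ‖h - y * y‖ ≤ ‖h‖ + ‖y * y‖ := norm_sub_le _ _
      have b3 : ‖y * y‖ ≤ ‖y‖ * ‖y‖ := norm_mul_le _ _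
      have b4 : ‖y‖ * ‖y‖ ≤ ε * ε := mul_le_mul hy1 hy1 (norm_nonneg y) hεpos.le
      have b6 : ‖h‖ + ‖y * y‖ ≤ δ + ε * ε := by nlinarith
      have b7 : ‖w‖ * ‖h - y * y‖ ≤ C * (δ + ε * ε) :=
        mul_le_mul hwC (b2.trans b6) (norm_nonneg _) hCpos.le
      have b8 : C * (δ + ε * ε) = ε / 2 + (1 / 4) * ε := by
        rw [mul_add, hCδ, show C * (ε * ε) = (C * ε) * ε by ring, hCε]
      show ‖w * (h - y * y)‖ ≤ ε
      nlinarith [hεpos]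
    · show τ (w * (h - y * y)) = w * (h - y * y)
      calc τ (w * (h - y * y)) = τ (h - y * y) * τ w := hτmul _ _
        _ = (τ h - τ (y * y)) * w := by rw [hτw, hτsub]
        _ = (h - y * y) * w := by rw [hτh, hτmul, hy2]
        _ = w * (h - y * y) := (hwc _).symm
  let F : S → S := fun y => ⟨w * (h - (y : E) * (y : E)), hmem _ y.2⟩
  have hFval : ∀ s : S, ((F s : S) : E) = w * (h - (s : E) * (s : E)) := fun s => rfl
  have hF : ContractingWith (1/2 : ℝ≥0) F := by
    refine ⟨by rw [← NNReal.coe_lt_coe]; norm_num, ?_⟩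
    apply LipschitzWith.of_dist_le_mul
    intro s t
    have hs1 := s.2.1
    have ht1 := t.2.1
    rw [Subtype.dist_eq, Subtype.dist_eq, dist_eq_norm, dist_eq_norm, hFval, hFval]
    have key : w * (h - (s : E) * (s : E)) - w * (h - (t : E) * (t : E))
        = w * ((t : E) * ((t : E) - (s : E)) + ((t : E) - (s : E)) * (s : E)) := by
      noncomm_ring
    have hcoe : ((1/2 : ℝ≥0) : ℝ) = 1 / 2 := by norm_num
    rw [hcoe]
    calc ‖w * (h - (s : E) * (s : E)) - w * (h - (t : E) * (t : E))‖
        = ‖w * ((t : E) * ((t : E) - (s : E)) + ((t : E) - (s : E)) * (s : E))‖ := by rw [key]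
      _ ≤ ‖w‖ * ‖(t : E) * ((t : E) - (s : E)) + ((t : E) - (s : E)) * (s : E)‖ :=
          norm_mul_le _ _
      _ ≤ ‖w‖ * (‖(t : E)‖ * ‖(t : E) - (s : E)‖ + ‖(t : E) - (s : E)‖ * ‖(s : E)‖) := by
          refine mul_le_mul_of_nonneg_left ?_ (norm_nonneg w)
          exact (norm_add_le _ _).trans (add_le_add (norm_mul_le _ _) (norm_mul_le _ _))
      _ ≤ C * (ε * ‖(t : E) - (s : E)‖ + ‖(t : E) - (s : E)‖ * ε) := by
          refine mul_le_mul hwC ?_ (by positivity) hCpos.le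
          exact add_le_add (mul_le_mul_of_nonneg_right ht1 (norm_nonneg _))
            (mul_le_mul_of_nonneg_left hs1 (norm_nonneg _))
      _ = (1 / 2) * ‖(t : E) - (s : E)‖ := by
          rw [show C * (ε * ‖(t : E) - (s : E)‖ + ‖(t : E) - (s : E)‖ * ε)
              = (C * ε) * (2 * ‖(t : E) - (s : E)‖) by ring, hCε]
          ring
      _ = (1 / 2) * ‖(s : E) - (t : E)‖ := by rw [norm_sub_rev]
  have hfix : F (ContractingWith.fixedPoint F hF) = ContractingWith.fixedPoint F hF :=
    hF.fixedPoint_isFixedPt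
  set y₀ : S := ContractingWith.fixedPoint F hF with hy₀def
  have vfix : w * (h - (y₀ : E) * (y₀ : E)) = (y₀ : E) := congrArg Subtype.val hfix
  have hnorm : ‖(y₀ : E)‖ ≤ ε := y₀.2.1
  have hτy : τ (y₀ : E) = (y₀ : E) := y₀.2.2
  have hsum : (y₀ : E) + (y₀ : E) = h - (y₀ : E) * (y₀ : E) := by
    calc (y₀ : E) + (y₀ : E)
        = w * (h - (y₀ : E) * (y₀ : E)) + w * (h - (y₀ : E) * (y₀ : E)) := by rw [vfix]
      _ = (w + w) * (h - (y₀ : E) * (y₀ : E)) := by rw [add_mul]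
      _ = h - (y₀ : E) * (y₀ : E) := by rw [hw, one_mul]
  have hlt : ‖-(y₀ : E)‖ < 1 := by
    rw [norm_neg]; exact lt_of_le_of_lt hnorm hε1
  refine ⟨Units.oneSub (-(y₀ : E)) hlt, ?_⟩
  have hval : ((Units.oneSub (-(y₀ : E)) hlt : Eˣ) : E) = 1 + (y₀ : E) := by
    rw [Units.val_oneSub, sub_neg_eq_add]
  rw [hval, hτadd, hτone, hτy]
  calc (1 + (y₀ : E)) * (1 + (y₀ : E))
      = 1 + ((y₀ : E) + (y₀ : E) + (y₀ : E) * (y₀ : E)) := by noncomm_ring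
    _ = 1 + h := by rw [hsum]; abel
set_option maxHeartbeats 1600000 in
set_option synthInstance.maxHeartbeats 400000 in
/-- Lemma 6.2 of the paper: for a finite-dimensional semisimple `ℚ_p`-algebra `E` with
involution `†` fixing `ℚ_p`, endowed with its canonical (Hausdorff topological-vector-space)
topology, the orbit `{α γ α^† : α ∈ E^×}` of an invertible element `γ` of `E^†` is open
in `E^†`. -/
theorem orbit_of_unit_isOpen_in_fixed_points_of_involution
    (p : ℕ) [Fact p.Prime]
    (E : Type*) [Ring E] [Algebra ℚ_[p] E] [FiniteDimensional ℚ_[p] E]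
    [IsSemisimpleRing E]
    [TopologicalSpace E] [IsTopologicalRing E] [ContinuousSMul ℚ_[p] E] [T2Space E]
    (dag : E →ₗ[ℚ_[p]] E)
    (hmul : ∀ x y : E, dag (x * y) = dag y * dag x)
    (hinv : ∀ x : E, dag (dag x) = x)
    (γ : E) (hγfix : dag γ = γ) (hγunit : IsUnit γ) :
    IsOpen {x : {y : E // dag y = y} | ∃ α : Eˣ, (x : E) = ↑α * γ * dag ↑α} := by
  classical
  obtain ⟨u0, hu0⟩ := hγunit
  subst hu0
  -- basic facts about `dag`
  have dag1 : dag (1 : E) = 1 := by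
    have h := hmul 1 (dag 1)
    rw [one_mul, hinv] at h
    simpa using h.symm
  have daginv : dag ((u0⁻¹ : Eˣ) : E) = ((u0⁻¹ : Eˣ) : E) := by
    have h1 : dag ((u0⁻¹ : Eˣ) : E) * (u0 : E) = 1 := by
      have h := hmul ((u0 : E)) ((u0⁻¹ : Eˣ) : E)
      rw [Units.mul_inv, dag1, hγfix] at h
      exact h.symm
    calc dag ((u0⁻¹ : Eˣ) : E)
        = dag ((u0⁻¹ : Eˣ) : E) * ((u0 : E) * ((u0⁻¹ : Eˣ) : E)) := by
          rw [Units.mul_inv, mul_one]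
      _ = (dag ((u0⁻¹ : Eˣ) : E) * (u0 : E)) * ((u0⁻¹ : Eˣ) : E) := by rw [mul_assoc]
      _ = ((u0⁻¹ : Eˣ) : E) := by rw [h1, one_mul]
  have hdagc : Continuous dag := dag.continuous_of_finiteDimensional
  -- the twisted involution τ
  let tau : E → E := fun v => (u0 : E) * dag v * ((u0⁻¹ : Eˣ) : E)
  have tau_one : tau 1 = 1 := by
    show (u0 : E) * dag 1 * ((u0⁻¹ : Eˣ) : E) = 1
    rw [dag1, mul_one, Units.mul_inv]
  have tau_add : ∀ a b : E, tau (a + b) = tau a + tau b := by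
    intro a b
    show (u0 : E) * dag (a + b) * _ = _
    rw [map_add, mul_add, add_mul]
  have tau_mul : ∀ a b : E, tau (a * b) = tau b * tau a := by
    intro a b
    show (u0 : E) * dag (a * b) * ((u0⁻¹ : Eˣ) : E)
        = ((u0 : E) * dag b * ((u0⁻¹ : Eˣ) : E)) * ((u0 : E) * dag a * ((u0⁻¹ : Eˣ) : E))
    rw [hmul]
    simp only [mul_assoc, Units.inv_mul_cancel_left]
  have tau_cont : Continuous tau := (continuous_const.mul hdagc).mul continuous_const
  -- the central element 1/2
  set w : E := algebraMap ℚ_[p] E (2⁻¹ : ℚ_[p]) with hwdef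
  have hww : w + w = 1 := by
    rw [hwdef, ← map_add, show (2⁻¹ : ℚ_[p]) + 2⁻¹ = 1 by norm_num, map_one]
  have hwc : ∀ v : E, w * v = v * w := by
    intro v; rw [hwdef]; exact Algebra.commutes _ v
  have hdagw : dag w = w := by
    rw [hwdef, Algebra.algebraMap_eq_smul_one, map_smul, dag1]
  have htauw : tau w = w := by
    show (u0 : E) * dag w * ((u0⁻¹ : Eˣ) : E) = w
    rw [hdagw, ← hwc, mul_assoc, Units.mul_inv, mul_one]
  -- build a normed ring structure on E compatible with the topology
  let e : E ≃ₗ[ℚ_[p]] (Fin (Module.finrank ℚ_[p] E) → ℚ_[p]) :=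
    (Module.finBasis ℚ_[p] E).equivFun
  let gfun : E → ((Fin (Module.finrank ℚ_[p] E) → ℚ_[p]) →L[ℚ_[p]] (Fin (Module.finrank ℚ_[p] E) → ℚ_[p])) := fun a =>
    LinearMap.toContinuousLinearMap
      (e.toLinearMap ∘ₗ LinearMap.mulLeft ℚ_[p] a ∘ₗ e.symm.toLinearMap)
  have gfun_apply : ∀ (a : E) (v : Fin (Module.finrank ℚ_[p] E) → ℚ_[p]), gfun a v = e (a * e.symm v) := fun a v => rfl
  let g : E →+* ((Fin (Module.finrank ℚ_[p] E) → ℚ_[p]) →L[ℚ_[p]] (Fin (Module.finrank ℚ_[p] E) → ℚ_[p])) :=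
  { toFun := gfun
    map_one' := by
      ext v
      simp [gfun_apply]
    map_mul' := by
      intro a b
      ext v
      simp [gfun_apply, ContinuousLinearMap.mul_apply, mul_assoc]
    map_zero' := by
      ext v
      simp [gfun_apply]
    map_add' := by
      intro a b
      ext v
      simp [gfun_apply, add_mul] }
  have gapp : ∀ (a : E) (v : Fin (Module.finrank ℚ_[p] E) → ℚ_[p]), g a v = e (a * e.symm v) := fun a v => rfl
  have gsmul : ∀ (c : ℚ_[p]) (x : E), g (c • x) = c • g x := by
    intro c x
    ext v
    simp [gapp, smul_mul_assoc]
  have ginj : Function.Injective g := by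
    intro a b hab
    have h1 := congrArg (fun f : (Fin (Module.finrank ℚ_[p] E) → ℚ_[p]) →L[ℚ_[p]] (Fin (Module.finrank ℚ_[p] E) → ℚ_[p]) => e.symm (f (e 1))) hab
    simpa [gapp] using h1
  let gL : E →ₗ[ℚ_[p]] ((Fin (Module.finrank ℚ_[p] E) → ℚ_[p]) →L[ℚ_[p]] (Fin (Module.finrank ℚ_[p] E) → ℚ_[p])) :=
  { toFun := gfun
    map_add' := fun a b => g.map_add a b
    map_smul' := fun c x => gsmul c x }
  have hgcont : Continuous (⇑g) := gL.continuous_of_finiteDimensional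
  let N0 : NormedRing E := NormedRing.induced E ((Fin (Module.finrank ℚ_[p] E) → ℚ_[p]) →L[ℚ_[p]] (Fin (Module.finrank ℚ_[p] E) → ℚ_[p])) g ginj
  have heq : (inferInstance : TopologicalSpace E)
      = N0.toMetricSpace.toUniformSpace.toTopologicalSpace := by
    have h1 : N0.toMetricSpace.toUniformSpace.toTopologicalSpace
        = TopologicalSpace.induced (⇑g) inferInstance := rfl
    rw [h1]
    refine le_antisymm (continuous_iff_le_induced.mp hgcont) ?_
    have hev : (⇑(ContinuousLinearMap.apply ℚ_[p] (Fin (Module.finrank ℚ_[p] E) → ℚ_[p]) (e 1)))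
        ∘ (⇑g) = ⇑e := by
      funext a
      show g a (e 1) = e a
      simp [gapp]
    have hse : (⇑e.symm : (Fin (Module.finrank ℚ_[p] E) → ℚ_[p]) → E) ∘ (⇑e) = id := by
      funext a
      simp
    have h2 : Continuous (⇑e.symm : (Fin (Module.finrank ℚ_[p] E) → ℚ_[p]) → E) :=
      e.symm.toLinearMap.continuous_of_finiteDimensional
    calc TopologicalSpace.induced (⇑g) inferInstance
        ≤ TopologicalSpace.induced (⇑g) (TopologicalSpace.induced
            (⇑(ContinuousLinearMap.apply ℚ_[p] (Fin (Module.finrank ℚ_[p] E) → ℚ_[p]) (e 1)))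
            inferInstance) :=
          induced_mono (continuous_iff_le_induced.mp
            (ContinuousLinearMap.apply ℚ_[p] (Fin (Module.finrank ℚ_[p] E) → ℚ_[p]) (e 1)).continuous)
      _ = TopologicalSpace.induced (⇑e) inferInstance := by
          rw [induced_compose, hev]
      _ ≤ TopologicalSpace.induced (⇑e)
            (TopologicalSpace.induced (⇑e.symm : (Fin (Module.finrank ℚ_[p] E) → ℚ_[p]) → E)
              inferInstance) :=
          induced_mono (continuous_iff_le_induced.mp h2)
      _ = (inferInstance : TopologicalSpace E) := by
          rw [induced_compose, hse, induced_id]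
  letI instMS : MetricSpace E := N0.toMetricSpace.replaceTopology heq
  letI instNR : NormedRing E := { N0 with toMetricSpace := instMS }
  letI instNS : NormedSpace ℚ_[p] E := by
    refine ⟨fun c x => le_of_eq ?_⟩
    show ‖g (c • x)‖ = ‖c‖ * ‖g x‖
    rw [gsmul]
    exact norm_smul c (g x)
  letI : CompleteSpace E := FiniteDimensional.complete ℚ_[p] E
  have hnormE : ∀ x : E, ‖x‖ = ‖g x‖ := fun x => rfl
  -- apply the square-root lemma
  obtain ⟨δ, hδpos, hsqrt⟩ := aux_sqrt tau tau_cont tau_add tau_mul tau_one w hww hwc htauw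
  rw [Metric.isOpen_iff]
  rintro x ⟨α0, hx0⟩
  have hA : (0:ℝ) < ‖((α0⁻¹ : Eˣ) : E)‖ * ‖dag ((α0⁻¹ : Eˣ) : E)‖ * ‖((u0⁻¹ : Eˣ) : E)‖ + 1 := by
    positivity
  refine ⟨δ / (‖((α0⁻¹ : Eˣ) : E)‖ * ‖dag ((α0⁻¹ : Eˣ) : E)‖ * ‖((u0⁻¹ : Eˣ) : E)‖ + 1),
    by positivity, ?_⟩
  intro y hy
  rw [Metric.mem_ball, Subtype.dist_eq, dist_eq_norm] at hy
  -- conjugate back to a neighborhood of γ = u0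
  have p1 : dag ((α0⁻¹ : Eˣ) : E) * dag ((α0 : Eˣ) : E) = 1 := by
    have h := hmul ((α0 : Eˣ) : E) ((α0⁻¹ : Eˣ) : E)
    rw [Units.mul_inv, dag1] at h
    exact h.symm
  have p2 : dag ((α0 : Eˣ) : E) * dag ((α0⁻¹ : Eˣ) : E) = 1 := by
    have h := hmul ((α0⁻¹ : Eˣ) : E) ((α0 : Eˣ) : E)
    rw [Units.inv_mul, dag1] at h
    exact h.symm
  set z : E := ((α0⁻¹ : Eˣ) : E) * (y : E) * dag ((α0⁻¹ : Eˣ) : E) with hz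
  have hzfix : dag z = z := by
    rw [hz, hmul, hmul, hinv, y.prop, mul_assoc]
  have e1 : ((α0⁻¹ : Eˣ) : E) * (x : E) * dag ((α0⁻¹ : Eˣ) : E) = (u0 : E) := by
    rw [hx0]
    simp only [mul_assoc]
    rw [p2, mul_one, Units.inv_mul_cancel_left]
  have key1 : z - (u0 : E) = ((α0⁻¹ : Eˣ) : E) * ((y : E) - (x : E)) * dag ((α0⁻¹ : Eˣ) : E) := by
    rw [hz, mul_sub, sub_mul, e1]
  set h : E := z * ((u0⁻¹ : Eˣ) : E) - 1 with hh0
  have key2 : h = (z - (u0 : E)) * ((u0⁻¹ : Eˣ) : E) := by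
    rw [hh0, sub_mul, Units.mul_inv]
  have htauh : tau h = h := by
    have t1 : tau (z * ((u0⁻¹ : Eˣ) : E)) = z * ((u0⁻¹ : Eˣ) : E) := by
      show (u0 : E) * dag (z * ((u0⁻¹ : Eˣ) : E)) * ((u0⁻¹ : Eˣ) : E) = _
      rw [hmul, daginv, hzfix]
      simp only [mul_assoc, Units.mul_inv_cancel_left]
    have tsub : tau (z * ((u0⁻¹ : Eˣ) : E) - 1) = tau (z * ((u0⁻¹ : Eˣ) : E)) - tau 1 := by
      show (u0 : E) * dag _ * ((u0⁻¹ : Eˣ) : E) = _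
      rw [map_sub, mul_sub, sub_mul]
    rw [hh0, tsub, t1, tau_one]
  have hnormh : ‖h‖ < δ := by
    have hb : ‖h‖ ≤ ‖((α0⁻¹ : Eˣ) : E)‖ * ‖(y : E) - (x : E)‖ * ‖dag ((α0⁻¹ : Eˣ) : E)‖
        * ‖((u0⁻¹ : Eˣ) : E)‖ := by
      rw [key2, key1]
      refine le_trans (norm_mul_le _ _) ?_
      refine mul_le_mul_of_nonneg_right ?_ (norm_nonneg _)
      refine le_trans (norm_mul_le _ _) ?_
      exact mul_le_mul_of_nonneg_right (norm_mul_le _ _) (norm_nonneg _)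
    have hyx : ‖(y : E) - (x : E)‖
        * (‖((α0⁻¹ : Eˣ) : E)‖ * ‖dag ((α0⁻¹ : Eˣ) : E)‖ * ‖((u0⁻¹ : Eˣ) : E)‖ + 1) < δ :=
      (lt_div_iff₀ hA).mp hy
    nlinarith [hb, hyx, norm_nonneg ((α0⁻¹ : Eˣ) : E), norm_nonneg (dag ((α0⁻¹ : Eˣ) : E)),
      norm_nonneg ((u0⁻¹ : Eˣ) : E), norm_nonneg ((y : E) - (x : E))]
  obtain ⟨α, hα⟩ := hsqrt h htauh hnormh
  have h1 : (α : E) * ((u0 : E) * dag ((α : Eˣ) : E) * ((u0⁻¹ : Eˣ) : E))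
      = z * ((u0⁻¹ : Eˣ) : E) := by
    calc (α : E) * ((u0 : E) * dag ((α : Eˣ) : E) * ((u0⁻¹ : Eˣ) : E)) = 1 + h := hα
      _ = z * ((u0⁻¹ : Eˣ) : E) := by rw [hh0]; abel
  have hz2 : (α : E) * (u0 : E) * dag ((α : Eˣ) : E) = z := by
    have h2 := congrArg (fun t : E => t * ((u0 : E))) h1
    simp only [mul_assoc, Units.inv_mul, mul_one] at h2
    simpa [mul_assoc] using h2
  refine ⟨α0 * α, ?_⟩
  calc (y : E)
      = ((α0 : Eˣ) : E) * (((α0⁻¹ : Eˣ) : E) * ((y : E) * (dag ((α0⁻¹ : Eˣ) : E)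
          * dag ((α0 : Eˣ) : E)))) := by
        rw [p1, mul_one, Units.mul_inv_cancel_left]
    _ = ((α0 : Eˣ) : E) * z * dag ((α0 : Eˣ) : E) := by
        rw [hz]; simp only [mul_assoc]
    _ = ((α0 : Eˣ) : E) * ((α : E) * (u0 : E) * dag ((α : Eˣ) : E)) * dag ((α0 : Eˣ) : E) := by
        rw [hz2]
    _ = ((α0 * α : Eˣ) : E) * (u0 : E) * dag ((α0 * α : Eˣ) : E) := by
        rw [Units.val_mul, hmul]
        simp only [mul_assoc]
end

section
/- Let p be a prime number and let P ∈ ℤ[X] be a monic polynomial of positive degree such that every complex root z of P satisfies |z|² = p. Let m be the largest natural number such that (X² − p)^m divides P in ℤ[X]. Then m is even if and only if P(0) = p^(deg P / 2); in particular, deg P is always even, so the exponent deg P / 2 is an integer. -/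
open Polynomial

/-- Definition 2.4 of the paper and the subsequent remark: for a monic `P ∈ ℤ[X]` of
positive degree all of whose complex roots `z` satisfy `|z|² = p`, the multiplicity `m` of
`X² - p` in `P` is even iff `P(0) = p^(deg P / 2)`; moreover `deg P` is even. -/
theorem pWeil_even_multiplicity_iff_eval_zero
    (p : ℕ) (hp : p.Prime)
    (P : Polynomial ℤ) (hmonic : P.Monic) (hdeg : 0 < P.natDegree)
    (hroots : ∀ z : ℂ, aeval z P = 0 → ‖z‖ ^ 2 = p)
    (m : ℕ) (hm : (X ^ 2 - C (p : ℤ)) ^ m ∣ P)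
    (hmax : ¬ (X ^ 2 - C (p : ℤ)) ^ (m + 1) ∣ P) :
    Even P.natDegree ∧ (Even m ↔ P.eval 0 = (p : ℤ) ^ (P.natDegree / 2)) := by
  obtain ⟨Q, hPQ⟩ := hm
  have hXmon : ((X : ℤ[X]) ^ 2 - C (p : ℤ)).Monic := monic_X_pow_sub_C _ two_ne_zero
  have hQmon : Q.Monic := (hXmon.pow m).of_mul_monic_left (hPQ ▸ hmonic)
  have hQne : Q ≠ 0 := hQmon.ne_zero
  have hQnd : ¬ ((X : ℤ[X]) ^ 2 - C (p : ℤ)) ∣ Q := by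
    rintro ⟨R, hR⟩
    exact hmax ⟨R, by rw [hPQ, hR, pow_succ]; ring⟩
  have hdegP2 : P.natDegree = 2 * m + Q.natDegree := by
    rw [hPQ, natDegree_mul (pow_ne_zero _ hXmon.ne_zero) hQne, natDegree_pow,
      natDegree_X_pow_sub_C]
    ring
  -- roots of Q also satisfy the Weil condition
  have hQroots : ∀ z : ℂ, aeval z Q = 0 → ‖z‖ ^ 2 = p := by
    intro z hz
    apply hroots
    rw [hPQ, map_mul, hz, mul_zero]
  -- Q has no real roots
  have hnoreal : ∀ c : ℝ, aeval c Q ≠ 0 := by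
    intro c hc
    have hc2 : c ^ 2 = (p : ℝ) := by
      have h := hQroots (c : ℂ) (by
        rw [show ((c : ℂ)) = algebraMap ℝ ℂ c from rfl, aeval_algebraMap_apply, hc, map_zero])
      rw [Complex.norm_real, Real.norm_eq_abs, sq_abs] at h
      exact_mod_cast h
    set R := Q %ₘ ((X : ℤ[X]) ^ 2 - C (p : ℤ)) with hRdef
    have hR0 : R ≠ 0 := fun h => hQnd ((modByMonic_eq_zero_iff_dvd hXmon).1 h)
    have hdegR : R.natDegree ≤ 1 := by
      have h2 := degree_modByMonic_lt Q hXmon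
      rw [degree_X_pow_sub_C (by norm_num) _] at h2
      have := (natDegree_lt_iff_degree_lt hR0).2 h2
      omega
    have hRform := eq_X_add_C_of_natDegree_le_one hdegR
    have hmod := modByMonic_add_div Q ((X : ℤ[X]) ^ 2 - C (p : ℤ))
    have haevalR : aeval c R = 0 := by
      have h3 := congrArg (aeval c) hmod
      have hq0 : aeval c ((X : ℤ[X]) ^ 2 - C (p : ℤ)) = 0 := by
        simp [hc2]
      rw [map_add, map_mul, hq0, zero_mul, add_zero, hc] at h3
      exact h3
    have heval : (R.coeff 1 : ℝ) * c + (R.coeff 0 : ℝ) = 0 := by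
      rw [hRform] at haevalR
      simpa using haevalR
    by_cases ha : R.coeff 1 = 0
    · have hb : R.coeff 0 = 0 := by
        rw [ha] at heval
        simp at heval
        exact_mod_cast heval
      exact hR0 (by rw [hRform, ha, hb]; simp)
    · have haR : ((R.coeff 1 : ℝ)) ≠ 0 := Int.cast_ne_zero.2 ha
      set q : ℚ := (-(R.coeff 0) : ℚ) / ((R.coeff 1 : ℤ) : ℚ) with hq
      have hcq : ((q : ℚ) : ℝ) = c := by
        rw [hq]
        push_cast
        field_simp
        linarith [heval]
      have hsqrt : Real.sqrt p = |c| := by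
        rw [← hc2, Real.sqrt_sq_eq_abs]
      exact hp.irrational_sqrt ⟨|q|, by rw [Rat.cast_abs, hcq, ← hsqrt]⟩
  -- Q is positive at 0
  have hQ0pos : 0 < Q.eval 0 := by
    have hcast : ∀ c : ℝ, aeval c Q = (Q.map (Int.castRingHom ℝ)).eval c := by
      intro c
      rw [aeval_def, eval₂_eq_eval_map]
      rfl
    have heval0 : (Q.map (Int.castRingHom ℝ)).eval 0 = ((Q.eval 0 : ℤ) : ℝ) := by
      rw [eval_map, eval₂_at_zero, coeff_zero_eq_eval_zero]
      rfl
    rcases Nat.eq_zero_or_pos Q.natDegree with h0 | hpos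
    · rw [hQmon.natDegree_eq_zero.1 h0]
      simp
    · by_contra hle
      push_neg at hle
      have hne0 : (Q.map (Int.castRingHom ℝ)).eval 0 ≠ 0 := by
        rw [← hcast]; exact hnoreal 0
      have hneg : (Q.map (Int.castRingHom ℝ)).eval 0 < 0 := by
        rw [heval0]
        rcases lt_or_eq_of_le hle with h | h
        · exact_mod_cast h
        · exfalso; apply hne0; rw [heval0]; exact_mod_cast h
      have hQRmon : (Q.map (Int.castRingHom ℝ)).Monic := hQmon.map _
      have hdegpos : 0 < (Q.map (Int.castRingHom ℝ)).degree := by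
        rw [← natDegree_pos_iff_degree_pos, hQmon.natDegree_map]
        exact hpos
      have ht := (Q.map (Int.castRingHom ℝ)).tendsto_atTop_of_leadingCoeff_nonneg hdegpos
        (by rw [hQRmon.leadingCoeff]; norm_num)
      obtain ⟨x, hx1, hx0⟩ :=
        ((ht.eventually_ge_atTop 0).and (Filter.eventually_ge_atTop (0 : ℝ))).exists
      have hIVT := intermediate_value_Icc hx0
        ((Q.map (Int.castRingHom ℝ)).continuous.continuousOn (s := Set.Icc 0 x))
      obtain ⟨c, _, hcz⟩ := hIVT ⟨le_of_lt hneg, hx1⟩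
      exact hnoreal c (by rw [hcast]; exact hcz)
  -- the square of the constant coefficient
  have hsq : (Q.eval 0) ^ 2 = (p : ℤ) ^ Q.natDegree := by
    set QC := Q.map (Int.castRingHom ℂ) with hQC
    have hQCmon : QC.Monic := hQmon.map _
    have hsplit : QC.Splits := IsAlgClosed.splits QC
    have hcoeff := hsplit.coeff_zero_eq_prod_roots_of_monic hQCmon
    have hcard : Multiset.card QC.roots = Q.natDegree := by
      rw [splits_iff_card_roots.1 hsplit, hQmon.natDegree_map]
    have hconj : ∀ r ∈ QC.roots, r * (starRingEnd ℂ) r = (p : ℂ) := by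
      intro r hr
      have hr0 : aeval r Q = 0 := by
        have h := isRoot_of_mem_roots hr
        rw [IsRoot.def] at h
        rw [aeval_def, eval₂_eq_eval_map]
        exact h
      have h2 := hQroots r hr0
      rw [Complex.mul_conj]
      rw [← Complex.sq_norm, h2]
      norm_num
    have hprodmap : (QC.roots.map (fun r => r * (starRingEnd ℂ) r)).prod
        = (p : ℂ) ^ Q.natDegree := by
      rw [show QC.roots.map (fun r => r * (starRingEnd ℂ) r)
          = Multiset.replicate Q.natDegree ((p : ℕ) : ℂ) from Multiset.eq_replicate.2
        ⟨by simp [hcard], by rintro b hb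
                             obtain ⟨r, hr, rfl⟩ := Multiset.mem_map.1 hb
                             exact hconj r hr⟩, Multiset.prod_replicate]
    have hconj0 : (starRingEnd ℂ) (QC.coeff 0) = QC.coeff 0 := by
      rw [hQC, coeff_map]
      simp
    have hCsq : (QC.coeff 0) ^ 2 = (p : ℂ) ^ Q.natDegree := by
      calc (QC.coeff 0) ^ 2 = QC.coeff 0 * (starRingEnd ℂ) (QC.coeff 0) := by
            rw [hconj0, sq]
        _ = QC.roots.prod * (QC.roots.map (starRingEnd ℂ)).prod := by
            have hneg : ((-1 : ℂ) ^ QC.natDegree) * ((-1 : ℂ) ^ QC.natDegree) = 1 := by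
              rw [← pow_add, ← two_mul, pow_mul, neg_one_sq, one_pow]
            rw [hcoeff, map_mul, map_pow, map_neg, map_one, map_multiset_prod]
            linear_combination QC.roots.prod * (QC.roots.map (starRingEnd ℂ)).prod * hneg
        _ = (QC.roots.map (fun r => r * (starRingEnd ℂ) r)).prod := by
            rw [Multiset.prod_map_mul, Multiset.map_id']
        _ = (p : ℂ) ^ Q.natDegree := hprodmap
    have hc0 : QC.coeff 0 = ((Q.eval 0 : ℤ) : ℂ) := by
      rw [hQC, coeff_map, coeff_zero_eq_eval_zero]
      rfl
    rw [hc0] at hCsq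
    exact_mod_cast hCsq
  -- the degree of Q is even
  have hQeven : Even Q.natDegree := by
    have h1 : (Q.eval 0).natAbs ^ 2 = p ^ Q.natDegree := by
      have h := congrArg Int.natAbs hsq
      rwa [Int.natAbs_pow, Int.natAbs_pow, Int.natAbs_natCast] at h
    have h2 := congrArg (fun n => n.factorization p) h1
    simp only [Nat.factorization_pow, hp.factorization_pow, Finsupp.smul_apply,
      Finsupp.single_eq_same, smul_eq_mul] at h2
    exact ⟨(Q.eval 0).natAbs.factorization p, by omega⟩
  obtain ⟨t, ht⟩ := hQeven
  -- Q(0) = p^t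
  have hppos : (0 : ℤ) < (p : ℤ) ^ t := pow_pos (by exact_mod_cast hp.pos) t
  have hQ0 : Q.eval 0 = (p : ℤ) ^ t := by
    have h2 : (Q.eval 0 - (p : ℤ) ^ t) * (Q.eval 0 + (p : ℤ) ^ t) = 0 := by
      have h3 : ((p : ℤ) ^ t) ^ 2 = (p : ℤ) ^ Q.natDegree := by
        rw [ht, ← pow_mul]
        ring_nf
      linear_combination hsq - h3
    rcases mul_eq_zero.1 h2 with h | h
    · linarith
    · linarith
  -- final assembly
  have hPdegEven : Even P.natDegree := ⟨m + t, by omega⟩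
  refine ⟨hPdegEven, ?_⟩
  have hP0 : P.eval 0 = (-(p : ℤ)) ^ m * (p : ℤ) ^ t := by
    rw [hPQ, eval_mul, eval_pow, hQ0]
    simp
  have hhalf : P.natDegree / 2 = m + t := by omega
  rw [hP0, hhalf]
  have hppow : (0 : ℤ) < (p : ℤ) ^ (m + t) := pow_pos (by exact_mod_cast hp.pos) (m + t)
  constructor
  · intro hme
    rw [hme.neg_pow, pow_add]
  · intro h
    by_contra hodd
    rw [Nat.not_even_iff_odd] at hodd
    rw [hodd.neg_pow, pow_add] at h
    have hpm : (0 : ℤ) < (p : ℤ) ^ m := pow_pos (by exact_mod_cast hp.pos) m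
    rw [pow_add] at hppow
    nlinarith
end

section
/- Let p be a prime, L a field of characteristic zero, and V a finite-dimensional L-vector space. Let φ₀ and θ be L-linear automorphisms of V such that φ₀ ∘ θ ∘ φ₀⁻¹ = θ^p, θ has finite order e with gcd(e, p) = 1, and every element of the subgroup of GL(V) generated by φ₀ and θ is a semisimple endomorphism whose trace lies in the image of ℚ in L. For each divisor r of e let V_r = ker Φ_r(θ), where Φ_r ∈ ℚ[X] is the r-th cyclotomic polynomial (evaluated at θ via ℚ[X] → L[X]). Then V is the internal direct sum V = ⊕_{r ∣ e} V_r; each V_r is stable under both θ and φ₀; and for every divisor r of e and every element u of the subgroup generated by φ₀ and θ, the trace of the restriction of u to V_r lies in the image of ℚ in L. -/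
/-!
Since `θ ^ e = 1` and `X ^ e - 1 = ∏_{r ∣ e} Φ_r` with pairwise coprime factors, `V` is the
direct sum of the `ker Φ_r(θ)`. The relation `φ₀ θ = θ ^ p φ₀` makes `φ₀` carry `ker Φ_r(θ)` into
`ker Φ_r(θ ^ p)`, and `φ₀⁻¹` back; these kernels coincide because `Φ_r(X)` divides `Φ_r(X ^ k)`
for every `k` prime to `r`, applied to `k = p` and to an inverse of `p` modulo `e`. Finally,
the projection onto `ker Φ_r(θ)` along the other summands is a polynomial in `θ` with rational
coefficients (a Bézout identity over `ℚ`), so the trace of `u` on `ker Φ_r(θ)` is a rational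
combination of the traces of the `u θ ^ i`.
-/

open Polynomial LinearMap

namespace Polynomial

theorem cyclotomic_dvd_expand_of_coprime {R : Type*} [CommRing R] {r k : ℕ}
    (hk : k.Coprime r) : cyclotomic r R ∣ expand R k (cyclotomic r R) := by
  induction k using Nat.recOnMul with
  | zero =>
    obtain rfl : r = 1 := Nat.coprime_zero_left r |>.mp hk
    simp
  | one => simp
  | prime q hq =>
    rw [cyclotomic_expand_eq_cyclotomic_mul hq (hq.coprime_iff_not_dvd.mp hk)]
    exact dvd_mul_left _ _
  | mul a b iha ihb =>
    rw [Nat.coprime_mul_iff_left] at hk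
    rw [expand_mul]
    obtain ⟨c, hc⟩ := ihb hk.2
    exact (iha hk.1).trans ⟨expand R a c, by rw [hc, map_mul]⟩

end Polynomial

theorem exists_coprime_pow_pow_eq_self {G : Type*} [Monoid G] {x : G} {k : ℕ}
    (hk : k.Coprime (orderOf x)) : ∃ m, m.Coprime (orderOf x) ∧ (x ^ k) ^ m = x := by
  rcases (orderOf x).eq_zero_or_pos with h0 | hpos
  · rw [h0, Nat.coprime_zero_right] at hk
    exact ⟨1, by rw [h0]; exact Nat.coprime_one_left 0, by rw [hk, pow_one, pow_one]⟩
  refine ⟨k ^ ((orderOf x).totient - 1), hk.pow_left _, ?_⟩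
  rw [← pow_mul, ← pow_succ', Nat.sub_add_cancel (Nat.totient_pos.mpr hpos),
    ← pow_mod_orderOf, Nat.ModEq.pow_totient hk, pow_mod_orderOf, pow_one]

theorem SemiconjBy.aeval {R A : Type*} [CommSemiring R] [Semiring A] [Algebra R A] {a x y : A}
    (h : SemiconjBy a x y) (q : R[X]) :
    SemiconjBy a (Polynomial.aeval x q) (Polynomial.aeval y q) := by
  simp only [SemiconjBy, aeval_eq_sum_range, Finset.mul_sum, Finset.sum_mul, mul_smul_comm,
    smul_mul_assoc, (h.pow_right _).eq]

section

variable {R M : Type*} [CommRing R] [AddCommGroup M] [Module R M]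

theorem SemiconjBy.mapsTo_ker_aeval {a x y : Module.End R M} (h : SemiconjBy a x y)
    (q : R[X]) {v : M} (hv : v ∈ ker (Polynomial.aeval x q)) :
    a v ∈ ker (Polynomial.aeval y q) := by
  rw [mem_ker, ← Module.End.mul_apply, ← (h.aeval q).eq, Module.End.mul_apply, mem_ker.mp hv,
    map_zero]

theorem ker_aeval_cyclotomic_le_ker_aeval_pow (g : Module.End R M) {r k : ℕ}
    (hk : k.Coprime r) :
    ker (aeval g (cyclotomic r R)) ≤ ker (aeval (g ^ k) (cyclotomic r R)) := by
  obtain ⟨c, hc⟩ := cyclotomic_dvd_expand_of_coprime (R := R) hk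
  intro v hv
  rw [mem_ker, ← expand_aeval, hc, mul_comm, aeval_mul, Module.End.mul_apply, mem_ker.mp hv,
    map_zero]

theorem ker_aeval_cyclotomic_pow_eq (g : Module.End R M) {r k : ℕ}
    (hk : k.Coprime (orderOf g)) (hr : r ∣ orderOf g) :
    ker (aeval (g ^ k) (cyclotomic r R)) = ker (aeval g (cyclotomic r R)) := by
  obtain ⟨m, hm, hgm⟩ := exists_coprime_pow_pow_eq_self hk
  refine le_antisymm ?_ (ker_aeval_cyclotomic_le_ker_aeval_pow g (hk.coprime_dvd_right hr))
  simpa only [hgm] using ker_aeval_cyclotomic_le_ker_aeval_pow (g ^ k) (hm.coprime_dvd_right hr)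

theorem mapsTo_of_mem_closure {S : Set (Module.End R M)ˣ} {W : Submodule R M}
    (hS : ∀ u ∈ S, ∀ x ∈ W, (u : Module.End R M) x ∈ W ∧ (↑u⁻¹ : Module.End R M) x ∈ W)
    {u : (Module.End R M)ˣ} (hu : u ∈ Subgroup.closure S) :
    ∀ x ∈ W, (u : Module.End R M) x ∈ W := by
  suffices ∀ x ∈ W, (u : Module.End R M) x ∈ W ∧ (↑u⁻¹ : Module.End R M) x ∈ W from
    fun x hx => (this x hx).1
  induction hu using Subgroup.closure_induction with
  | mem u hu => exact hS u hu
  | one => simp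
  | mul u v _ _ hu hv =>
    exact fun x hx => ⟨(hu _ (hv x hx).1).1, by simpa using (hv _ (hu x hx).2).2⟩
  | inv u _ hu => simpa using fun x hx => (hu x hx).symm

theorem isProj_ker_aeval_of_mul_eq_zero (f : Module.End R M) {a b q s : R[X]}
    (hab : a * q + b * s = 1) (hqs : aeval f (q * s) = 0) :
    IsProj (ker (aeval f q)) (aeval f (b * s)) where
  map_mem x := by
    rw [mem_ker, ← Module.End.mul_apply, ← aeval_mul, mul_left_comm, aeval_mul, hqs, mul_zero,
      LinearMap.zero_apply]
  map_id x hx := by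
    have := congr(aeval f $hab x)
    rwa [aeval_add, LinearMap.add_apply, aeval_mul, Module.End.mul_apply, mem_ker.mp hx, map_zero,
      zero_add, aeval_one, Module.End.one_apply] at this

theorem ker_aeval_prod_eq_iSup {ι : Type*} [DecidableEq ι] (f : Module.End R M) {q : ι → R[X]}
    (hq : Pairwise fun i j => IsCoprime (q i) (q j)) (s : Finset ι) :
    ker (aeval f (∏ i ∈ s, q i)) = ⨆ i ∈ s, ker (aeval f (q i)) := by
  induction s using Finset.induction_on with
  | empty => simp [Module.End.one_eq_id]
  | insert i s hi ih =>
    have hcop : IsCoprime (q i) (∏ j ∈ s, q j) :=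
      IsCoprime.prod_right fun j hj => hq (ne_of_mem_of_not_mem hj hi).symm
    rw [Finset.prod_insert hi, ← sup_ker_aeval_eq_ker_aeval_mul_of_coprime f hcop, ih,
      Finset.iSup_insert]

theorem isInternal_ker_aeval_of_pairwise_isCoprime {ι : Type*} [Fintype ι] [DecidableEq ι]
    (f : Module.End R M) {q : ι → R[X]} (hq : Pairwise fun i j => IsCoprime (q i) (q j))
    (h : aeval f (∏ i, q i) = 0) : DirectSum.IsInternal fun i => ker (aeval f (q i)) := by
  rw [DirectSum.isInternal_submodule_iff_iSupIndep_and_iSup_eq_top]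
  constructor
  · intro i
    have hcop : IsCoprime (q i) (∏ j ∈ Finset.univ.erase i, q j) :=
      IsCoprime.prod_right fun j hj => hq (Finset.ne_of_mem_erase hj).symm
    simpa [ker_aeval_prod_eq_iSup f hq] using disjoint_ker_aeval_of_isCoprime f hcop
  · simpa [h] using (ker_aeval_prod_eq_iSup f hq Finset.univ).symm

theorem aeval_prod_cyclotomic_eq_zero {f : Module.End R M} {e : ℕ} (he : 0 < e)
    (hf : f ^ e = 1) : aeval f (∏ r ∈ e.divisors, cyclotomic r R) = 0 := by
  rw [prod_cyclotomic_eq_X_pow_sub_one he, map_sub, aeval_X_pow, hf, map_one, sub_self]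

end

section

variable {K V : Type*} [Field K] [AddCommGroup V] [Module K V]

theorem LinearMap.IsProj.trace_restrict_eq_s9 [FiniteDimensional K V] {W : Submodule K V}
    {π : Module.End K V} (hπ : IsProj W π) (u : Module.End K V) (hu : ∀ x ∈ W, u x ∈ W) :
    LinearMap.trace K W (u.restrict hu) = LinearMap.trace K V (u * π) := by
  rw [← trace_restrict_eq_of_forall_mem W (u * π) fun x => hu _ (hπ.map_mem x)]
  congr 1
  ext x
  simp [hπ.map_id x x.2]

theorem trace_mul_aeval_map_mem_range {F : Type*} [CommRing F] [Algebra F K]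
    (u f : Module.End K V) (h : ∀ i : ℕ, trace K V (u * f ^ i) ∈ Set.range (algebraMap F K))
    (g : F[X]) :
    trace K V (u * aeval f (g.map (algebraMap F K))) ∈ Set.range (algebraMap F K) := by
  rw [← RingHom.coe_range, aeval_eq_sum_range, Finset.mul_sum, map_sum]
  refine sum_mem fun i _ => ?_
  rw [coeff_map, mul_smul_comm, map_smul, smul_eq_mul]
  exact mul_mem (RingHom.mem_range_self _ _) (h i)

variable [CharZero K]

theorem isInternal_ker_aeval_cyclotomic {f : Module.End K V} {e : ℕ} (he : 0 < e)
    (hf : f ^ e = 1) :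
    DirectSum.IsInternal fun r : {r // r ∣ e} => ker (aeval f (cyclotomic r K)) := by
  let _ : Fintype {r // r ∣ e} := Fintype.subtype e.divisors fun r => by simp [he.ne']
  refine isInternal_ker_aeval_of_pairwise_isCoprime f (fun r s hrs => ?_) ?_
  · simpa [map_cyclotomic] using (cyclotomic.isCoprime_rat (Subtype.coe_ne_coe.mpr hrs)).map
      (mapRingHom (algebraMap ℚ K))
  · rw [← Finset.prod_subtype e.divisors (fun r => by simp [he.ne']) (fun r => cyclotomic r K)]
    exact aeval_prod_cyclotomic_eq_zero he hf

theorem exists_rat_isProj_ker_aeval_cyclotomic {f : Module.End K V} {e r : ℕ} (he : 0 < e)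
    (hf : f ^ e = 1) (hr : r ∣ e) :
    ∃ g : ℚ[X], IsProj (ker (aeval f (cyclotomic r K))) (aeval f (g.map (algebraMap ℚ K))) := by
  obtain ⟨a, b, hab⟩ : IsCoprime (cyclotomic r ℚ) (∏ s ∈ e.divisors.erase r, cyclotomic s ℚ) :=
    IsCoprime.prod_right fun s hs => cyclotomic.isCoprime_rat (Finset.ne_of_mem_erase hs).symm
  refine ⟨b * ∏ s ∈ e.divisors.erase r, cyclotomic s ℚ, ?_⟩
  have habK := congr(($hab).map (algebraMap ℚ K))
  simp only [Polynomial.map_add, Polynomial.map_mul, Polynomial.map_prod, map_cyclotomic,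
    Polynomial.map_one] at habK ⊢
  refine isProj_ker_aeval_of_mul_eq_zero f habK ?_
  rw [Finset.mul_prod_erase _ (fun s => cyclotomic s K) (Nat.mem_divisors.mpr ⟨hr, he.ne'⟩)]
  exact aeval_prod_cyclotomic_eq_zero he hf

end

theorem tame_pair_cyclotomic_decomposition_general
    (p : ℕ)
    (L : Type*) [Field L] [CharZero L]
    (V : Type*) [AddCommGroup V] [Module L V] [FiniteDimensional L V]
    (φ₀ θ : (Module.End L V)ˣ)
    (hrel : φ₀ * θ * φ₀⁻¹ = θ ^ p)
    (e : ℕ) (he : 0 < e) (horder : orderOf θ = e) (hcop : Nat.Coprime e p)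
    (htr : ∀ u ∈ Subgroup.closure {φ₀, θ},
      LinearMap.trace L V ((u : (Module.End L V)ˣ) : Module.End L V)
        ∈ Set.range (algebraMap ℚ L)) :
    let Vr : {r : ℕ // r ∣ e} → Submodule L V := fun r =>
      LinearMap.ker (aeval ((θ : Module.End L V))
        ((Polynomial.cyclotomic r ℚ).map (algebraMap ℚ L)))
    ∃ hstab : ∀ (r : {r : ℕ // r ∣ e}) (u : (Module.End L V)ˣ),
        u ∈ Subgroup.closure {φ₀, θ} →
        ∀ x ∈ Vr r, (u : Module.End L V) x ∈ Vr r,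
      DirectSum.IsInternal Vr ∧
      (∀ (r : {r : ℕ // r ∣ e}) (u : (Module.End L V)ˣ)
        (hu : u ∈ Subgroup.closure {φ₀, θ}),
        LinearMap.trace L (Vr r) ((u : Module.End L V).restrict (hstab r u hu))
          ∈ Set.range (algebraMap ℚ L)) := by
  intro Vr
  set f := (θ : Module.End L V)
  have hVr (r : {r // r ∣ e}) : Vr r = ker (aeval f (cyclotomic r L)) := by
    simp only [Vr, f, map_cyclotomic]
  have hf : f ^ e = 1 := by rw [← horder, ← orderOf_units, pow_orderOf_eq_one]
  have hconj : SemiconjBy (φ₀ : Module.End L V) f (f ^ p) := by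
    simpa using (SemiconjBy.map (by rw [SemiconjBy, ← hrel, inv_mul_cancel_right] :
      SemiconjBy φ₀ θ (θ ^ p)) (Units.coeHom (Module.End L V)))
  have hker (r : {r // r ∣ e}) :
      ker (aeval (f ^ p) (cyclotomic r L)) = ker (aeval f (cyclotomic r L)) := by
    apply ker_aeval_cyclotomic_pow_eq f <;> rw [orderOf_units, horder]
    exacts [hcop.symm, r.2]
  have hstab (r : {r // r ∣ e}) (u : (Module.End L V)ˣ) (hu : u ∈ Subgroup.closure {φ₀, θ}) :
      ∀ x ∈ Vr r, (u : Module.End L V) x ∈ Vr r := by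
    refine mapsTo_of_mem_closure ?_ hu
    rw [hVr]
    rintro v (rfl | rfl) x hx
    · exact ⟨(hker r).le (hconj.mapsTo_ker_aeval _ hx),
        hconj.units_inv_symm_left.mapsTo_ker_aeval _ ((hker r).ge hx)⟩
    · exact ⟨SemiconjBy.mapsTo_ker_aeval (Commute.refl f) _ hx,
        SemiconjBy.mapsTo_ker_aeval ((Commute.refl f).units_inv_left) _ hx⟩
  refine ⟨hstab, funext hVr ▸ isInternal_ker_aeval_cyclotomic he hf, fun r u hu => ?_⟩
  obtain ⟨g, hg⟩ := exists_rat_isProj_ker_aeval_cyclotomic (K := L) he hf r.2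
  rw [← hVr] at hg
  rw [hg.trace_restrict_eq_s9]
  refine trace_mul_aeval_map_mem_range _ _ (fun i => ?_) g
  simpa using htr _ (mul_mem hu (pow_mem (Subgroup.subset_closure (by simp)) i))

/-- First step of the ℚ-elementary decomposition (Lemma 5.1 of the paper): for
automorphisms `φ₀, θ` of a finite-dimensional `L`-vector space with `φ₀ θ φ₀⁻¹ = θ^p`,
`θ` of finite order `e` prime to `p`, all elements of `⟨φ₀, θ⟩` semisimple with traces
in `ℚ`, the space decomposes as the internal direct sum of the `V_r = ker Φ_r(θ)` over the
divisors `r` of `e`; each `V_r` is stable under the subgroup generated by `φ₀` and `θ`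
(in particular under `θ` and `φ₀`), and the trace of the restriction to `V_r` of every
element of that subgroup lies in `ℚ`. -/
theorem tame_pair_cyclotomic_decomposition
    (p : ℕ) (hp : p.Prime)
    (L : Type*) [Field L] [CharZero L]
    (V : Type*) [AddCommGroup V] [Module L V] [FiniteDimensional L V]
    (φ₀ θ : (Module.End L V)ˣ)
    (hrel : φ₀ * θ * φ₀⁻¹ = θ ^ p)
    (e : ℕ) (he : 0 < e) (horder : orderOf θ = e) (hcop : Nat.Coprime e p)
    (hss : ∀ u ∈ Subgroup.closure {φ₀, θ}, ((u : (Module.End L V)ˣ) :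
      Module.End L V).IsSemisimple)
    (htr : ∀ u ∈ Subgroup.closure {φ₀, θ},
      LinearMap.trace L V ((u : (Module.End L V)ˣ) : Module.End L V)
        ∈ Set.range (algebraMap ℚ L)) :
    let Vr : {r : ℕ // r ∣ e} → Submodule L V := fun r =>
      LinearMap.ker (aeval ((θ : Module.End L V))
        ((Polynomial.cyclotomic r ℚ).map (algebraMap ℚ L)))
    ∃ hstab : ∀ (r : {r : ℕ // r ∣ e}) (u : (Module.End L V)ˣ),
        u ∈ Subgroup.closure {φ₀, θ} →
        ∀ x ∈ Vr r, (u : Module.End L V) x ∈ Vr r,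
      DirectSum.IsInternal Vr ∧
      (∀ (r : {r : ℕ // r ∣ e}) (u : (Module.End L V)ˣ)
        (hu : u ∈ Subgroup.closure {φ₀, θ}),
        LinearMap.trace L (Vr r) ((u : Module.End L V).restrict (hstab r u hu))
          ∈ Set.range (algebraMap ℚ L)) :=
  tame_pair_cyclotomic_decomposition_general p L V φ₀ θ hrel e he horder hcop htr
end
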